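/- Monotonicity of the conditional information spectrum entropy of pure states under LOCC (in Lo–Popescu form): let |ψ⟩ be a unit vector in ℂ^{d_A} ⊗ ℂ^{d_B}, ψ_AB = |ψ⟩⟨ψ|, and ψ_B = Tr_A ψ_AB. Let (U_j)_{j∈J} be a finite family of d_A×d_A unitaries and (K_j)_{j∈J} a family of d_B×d_B matrices with ∑_{j∈J} K_jᴴ K_j = I, and set σ_AB := ∑_{j∈J} (U_j ⊗ K_j) ψ_AB (U_jᴴ ⊗ K_jᴴ) and σ_B := Tr_A σ_AB. Then for every ε ∈ (0,1), D̲_s^ε(σ_AB‖I_A ⊗ σ_B) ≤ D̲_s^ε(ψ_AB‖I_A ⊗ ψ_B), where each supremum is taken in the extended reals; equivalently, the conditional entropies H̄_s^ε(A|B)_ψ := −D̲_s^ε(ψ_AB‖I_A⊗ψ_B) and H̄_s^ε(A|B)_σ := −D̲_s^ε(σ_AB‖I_A⊗σ_B) satisfy H̄_s^ε(A|B)_ψ ≤ H̄_s^ε(A|B)_σ. -/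

import Mathlib

open Matrix
open scoped ComplexOrder

noncomputable section

/-- Positive part `C₊` of a Hermitian matrix, obtained by applying `x ↦ max x 0` to the
eigenvalues in a spectral decomposition (junk value `0` for non-Hermitian input). -/
def matPos {n : Type*} [Fintype n] [DecidableEq n] (A : Matrix n n ℂ) : Matrix n n ℂ :=
  if hA : A.IsHermitian then
    (hA.eigenvectorUnitary : Matrix n n ℂ) *
      Matrix.diagonal (fun i => ((max (hA.eigenvalues i) 0 : ℝ) : ℂ)) *
      star (hA.eigenvectorUnitary : Matrix n n ℂ)
  else 0

/-- `Tr C₊` as a real number. -/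
def trPos {n : Type*} [Fintype n] [DecidableEq n] (A : Matrix n n ℂ) : ℝ :=
  (matPos A).trace.re

/-- Spectral projection of a Hermitian matrix onto `[0, ∞)` (junk value `0` for
non-Hermitian input). -/
def projNonneg {n : Type*} [Fintype n] [DecidableEq n] (A : Matrix n n ℂ) : Matrix n n ℂ :=
  if hA : A.IsHermitian then
    (hA.eigenvectorUnitary : Matrix n n ℂ) *
      Matrix.diagonal (fun i => if 0 ≤ hA.eigenvalues i then (1 : ℂ) else 0) *
      star (hA.eigenvectorUnitary : Matrix n n ℂ)
  else 0

/-- The information spectrum relative entropy `D̲_s^ε(ρ‖σ)`, with the supremum taken in the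
extended reals. -/
def DlowE {n : Type*} [Fintype n] [DecidableEq n] (ε : ℝ) (ρ σ : Matrix n n ℂ) : EReal :=
  sSup (Real.toEReal '' {γ : ℝ | 1 - ε ≤ trPos (ρ - (2 : ℝ) ^ γ • σ)})

/-- The information spectrum relative entropy `D̄_s^ε(ρ‖σ)`, with the infimum taken in the
extended reals. -/
def DhighE {n : Type*} [Fintype n] [DecidableEq n] (ε : ℝ) (ρ σ : Matrix n n ℂ) : EReal :=
  sInf (Real.toEReal '' {γ : ℝ | trPos (ρ - (2 : ℝ) ^ γ • σ) ≤ ε})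

open Kronecker

/-- Partial trace over the first (`A`) tensor factor. -/
def trA {dA dB : ℕ} (M : Matrix (Fin dA × Fin dB) (Fin dA × Fin dB) ℂ) :
    Matrix (Fin dB) (Fin dB) ℂ :=
  Matrix.of fun k l => ∑ i, M (i, k) (i, l)

/-!
The Lo–Popescu map `Φ X = ∑ⱼ (Uⱼ ⊗ Kⱼ) X (Uⱼ ⊗ Kⱼ)ᴴ` is trace preserving, and because the `Uⱼ`
are unitary it is compatible with `X ↦ 1 ⊗ Tr_A X`: `Tr_A (Φ X) = ∑ⱼ Kⱼ (Tr_A X) Kⱼᴴ` and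
`Φ (1 ⊗ Y) = 1 ⊗ ∑ⱼ Kⱼ Y Kⱼᴴ`. Hence `σ_AB - 2^γ (1 ⊗ σ_B) = Φ (ψ_AB - 2^γ (1 ⊗ ψ_B))` for every
`γ`, and it suffices that `Tr (Φ D)₊ ≤ Tr D₊`. For that, write `Tr (Φ D)₊ = Re Tr (P Φ D)` with `P`
the projection onto the nonnegative spectral subspace of `Φ D`; then `Re Tr (P Φ D) =
Re Tr (Φ† P D)`, and `0 ≤ Φ† P ≤ 1` gives `Re Tr (Φ† P D) ≤ Tr D₊`.
-/

open scoped MatrixOrder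

namespace Matrix.IsHermitian

variable {n : Type*} [Fintype n] [DecidableEq n] {A : Matrix n n ℂ} (hA : A.IsHermitian)
include hA

lemma matPos_eq_cfc : matPos A = cfc (fun x : ℝ => max x 0) A := by
  rw [matPos, dif_pos hA, hA.cfc_eq, IsHermitian.cfc, Unitary.conjStarAlgAut_apply]
  rfl

lemma projNonneg_eq_cfc : projNonneg A = cfc (fun x : ℝ => if 0 ≤ x then 1 else 0) A := by
  rw [projNonneg, dif_pos hA, hA.cfc_eq, IsHermitian.cfc, Unitary.conjStarAlgAut_apply]
  congr 3
  ext i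
  split_ifs <;> simp [*]

lemma matPos_nonneg : 0 ≤ matPos A := by
  rw [hA.matPos_eq_cfc]
  exact cfc_nonneg fun x _ => le_max_right x 0

lemma self_le_matPos : A ≤ matPos A := by
  rw [hA.matPos_eq_cfc]
  conv_lhs => rw [← cfc_id ℝ A]
  exact cfc_mono fun x _ => le_max_left x 0

lemma projNonneg_nonneg : 0 ≤ projNonneg A := by
  rw [hA.projNonneg_eq_cfc]
  exact cfc_nonneg fun x _ => by split_ifs <;> norm_num

lemma projNonneg_le_one : projNonneg A ≤ 1 := by
  rw [hA.projNonneg_eq_cfc]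
  exact cfc_le_one _ _ fun x _ => by split_ifs <;> norm_num

lemma projNonneg_mul_self : projNonneg A * A = matPos A := by
  rw [hA.projNonneg_eq_cfc, hA.matPos_eq_cfc]
  calc _ = cfc (fun x : ℝ => if 0 ≤ x then 1 else 0) A * cfc id A := by rw [cfc_id ℝ A]
    _ = cfc (fun x : ℝ => (if 0 ≤ x then 1 else 0) * x) A :=
        (cfc_mul _ _ A (A.finite_real_spectrum.continuousOn _)).symm
    _ = cfc (fun x : ℝ => max x 0) A := cfc_congr fun x _ => by
      split_ifs with hx
      · simp [hx]
      · simp [(not_le.mp hx).le]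

end Matrix.IsHermitian

section TracePositivePart

variable {n : Type*} [Fintype n] [DecidableEq n]

lemma trace_mul_nonneg {P M : Matrix n n ℂ} (hP : 0 ≤ P) (hM : 0 ≤ M) : 0 ≤ (P * M).trace := by
  obtain ⟨B, rfl⟩ := CStarAlgebra.nonneg_iff_eq_star_mul_self.mp hP
  rw [mul_assoc, trace_mul_comm, mul_assoc, ← mul_assoc]
  exact (hM.posSemidef.mul_mul_conjTranspose_same B).trace_nonneg

lemma re_trace_mul_le_trPos {Q D : Matrix n n ℂ} (hD : D.IsHermitian) (hQ₀ : 0 ≤ Q)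
    (hQ₁ : Q ≤ 1) : (Q * D).trace.re ≤ trPos D := by
  have hpos : 0 ≤ ((1 - Q) * matPos D).trace :=
    trace_mul_nonneg (sub_nonneg.mpr hQ₁) hD.matPos_nonneg
  have hneg : 0 ≤ (Q * (matPos D - D)).trace :=
    trace_mul_nonneg hQ₀ (sub_nonneg.mpr hD.self_le_matPos)
  have hsplit : (Q * D).trace =
      (matPos D).trace - ((1 - Q) * matPos D).trace - (Q * (matPos D - D)).trace := by
    simp only [sub_mul, mul_sub, one_mul, trace_sub]
    ring
  rw [trPos, hsplit, Complex.sub_re, Complex.sub_re]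
  linarith [(Complex.nonneg_iff.mp hpos).1, (Complex.nonneg_iff.mp hneg).1]

lemma trPos_eq_re_trace_projNonneg_mul {C : Matrix n n ℂ} (hC : C.IsHermitian) :
    trPos C = (projNonneg C * C).trace.re := by
  rw [trPos, hC.projNonneg_mul_self]

end TracePositivePart

section KrausMap

variable {n J : Type*} [Fintype n] [Fintype J]

def krausMap (V : J → Matrix n n ℂ) (X : Matrix n n ℂ) : Matrix n n ℂ :=
  ∑ j, V j * X * (V j)ᴴ

variable (V : J → Matrix n n ℂ)

lemma krausMap_sub (X Y : Matrix n n ℂ) : krausMap V (X - Y) = krausMap V X - krausMap V Y := by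
  simp only [krausMap, mul_sub, sub_mul, Finset.sum_sub_distrib]

lemma krausMap_smul (c : ℝ) (X : Matrix n n ℂ) : krausMap V (c • X) = c • krausMap V X := by
  simp only [krausMap, Matrix.mul_smul, Matrix.smul_mul, Finset.smul_sum]

lemma Matrix.IsHermitian.krausMap {X : Matrix n n ℂ} (hX : X.IsHermitian) :
    (krausMap V X).IsHermitian := by
  simp only [IsHermitian, _root_.krausMap, conjTranspose_sum, conjTranspose_mul,
    conjTranspose_conjTranspose, hX.eq, mul_assoc]

lemma krausMap_nonneg {X : Matrix n n ℂ} (hX : 0 ≤ X) : 0 ≤ krausMap V X :=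
  Finset.sum_nonneg fun j _ => star_right_conjugate_nonneg hX (V j)

lemma krausMap_mono {X Y : Matrix n n ℂ} (h : X ≤ Y) : krausMap V X ≤ krausMap V Y := by
  rw [← sub_nonneg, ← krausMap_sub]
  exact krausMap_nonneg V (sub_nonneg.mpr h)

lemma trace_mul_krausMap (P X : Matrix n n ℂ) :
    (P * krausMap V X).trace = (krausMap (fun j => (V j)ᴴ) P * X).trace := by
  simp only [krausMap, Finset.mul_sum, Finset.sum_mul, trace_sum, conjTranspose_conjTranspose]
  refine Finset.sum_congr rfl fun j _ => ?_
  rw [← mul_assoc, trace_mul_cycle]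
  simp only [mul_assoc]

variable [DecidableEq n]

lemma krausMap_adjoint_le_one (hV : ∑ j, (V j)ᴴ * V j = 1) {P : Matrix n n ℂ} (hP : P ≤ 1) :
    krausMap (fun j => (V j)ᴴ) P ≤ 1 := by
  calc krausMap (fun j => (V j)ᴴ) P ≤ krausMap (fun j => (V j)ᴴ) 1 := krausMap_mono _ hP
    _ = 1 := by simpa [krausMap] using hV

lemma trPos_krausMap_le (hV : ∑ j, (V j)ᴴ * V j = 1) {D : Matrix n n ℂ} (hD : D.IsHermitian) :
    trPos (krausMap V D) ≤ trPos D := by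
  have hC := hD.krausMap V
  calc trPos (krausMap V D) = (projNonneg (krausMap V D) * krausMap V D).trace.re :=
        trPos_eq_re_trace_projNonneg_mul hC
    _ = (krausMap (fun j => (V j)ᴴ) (projNonneg (krausMap V D)) * D).trace.re := by
        rw [trace_mul_krausMap]
    _ ≤ trPos D := re_trace_mul_le_trPos hD (krausMap_nonneg _ hC.projNonneg_nonneg)
        (krausMap_adjoint_le_one V hV hC.projNonneg_le_one)

end KrausMap

lemma kronecker_sum {R l m n p J : Type*} [CommSemiring R] [Fintype J] (A : Matrix l m R)
    (X : J → Matrix n p R) : A ⊗ₖ (∑ j, X j) = ∑ j, A ⊗ₖ X j :=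
  map_sum (kroneckerBilinear (R := R) A) X Finset.univ

section LocalKraus

variable {m p J : Type*} [Fintype m] [Fintype p] [Fintype J] [DecidableEq m]

lemma kronecker_conj_one_kronecker {A : Matrix m m ℂ} (hA : A * Aᴴ = 1)
    (B X : Matrix p p ℂ) : (A ⊗ₖ B) * (1 ⊗ₖ X) * (A ⊗ₖ B)ᴴ = 1 ⊗ₖ (B * X * Bᴴ) := by
  rw [conjTranspose_kronecker, ← mul_kronecker_mul, ← mul_kronecker_mul, mul_one, hA]

lemma krausMap_kronecker_one_kronecker {U : J → Matrix m m ℂ} (hU : ∀ j, U j * (U j)ᴴ = 1)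
    (K : J → Matrix p p ℂ) (X : Matrix p p ℂ) :
    krausMap (fun j => U j ⊗ₖ K j) (1 ⊗ₖ X) = 1 ⊗ₖ krausMap K X := by
  simp only [krausMap, kronecker_conj_one_kronecker (hU _), kronecker_sum]

lemma sum_conjTranspose_mul_kronecker [DecidableEq p] {U : J → Matrix m m ℂ}
    (hU : ∀ j, (U j)ᴴ * U j = 1) {K : J → Matrix p p ℂ} (hK : ∑ j, (K j)ᴴ * K j = 1) :
    ∑ j, (U j ⊗ₖ K j)ᴴ * (U j ⊗ₖ K j) = 1 := by
  simp only [conjTranspose_kronecker, ← mul_kronecker_mul, hU, ← kronecker_sum, hK,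
    one_kronecker_one]

end LocalKraus

section PartialTrace

variable {dA dB : ℕ}

lemma trA_sum {J : Type*} [Fintype J] (M : J → Matrix (Fin dA × Fin dB) (Fin dA × Fin dB) ℂ) :
    trA (∑ j, M j) = ∑ j, trA (M j) := by
  ext k l
  simp only [trA, of_apply, Matrix.sum_apply]
  exact Finset.sum_comm

lemma Matrix.IsHermitian.trA {M : Matrix (Fin dA × Fin dB) (Fin dA × Fin dB) ℂ}
    (hM : M.IsHermitian) : (_root_.trA M).IsHermitian := by
  ext k l
  simp only [_root_.trA, conjTranspose_apply, of_apply, star_sum]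
  exact Finset.sum_congr rfl fun i _ => congrFun (congrFun hM (i, k)) (i, l)

lemma trA_kronecker_one_mul_comm (X : Matrix (Fin dA) (Fin dA) ℂ)
    (M : Matrix (Fin dA × Fin dB) (Fin dA × Fin dB) ℂ) :
    trA ((X ⊗ₖ 1) * M) = trA (M * (X ⊗ₖ 1)) := by
  ext k l
  simp only [trA, of_apply, mul_apply, kroneckerMap_apply, one_apply, mul_ite, mul_one, mul_zero,
    ite_mul, zero_mul, Fintype.sum_prod_type, Finset.sum_ite_eq, Finset.sum_ite_eq',
    Finset.mem_univ, if_true]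
  rw [Finset.sum_comm]
  simp only [mul_comm]

lemma trA_one_kronecker_mul (B : Matrix (Fin dB) (Fin dB) ℂ)
    (M : Matrix (Fin dA × Fin dB) (Fin dA × Fin dB) ℂ) :
    trA ((1 ⊗ₖ B) * M) = B * trA M := by
  ext k l
  simp only [trA, of_apply, mul_apply, kroneckerMap_apply, one_apply, ite_mul, one_mul, zero_mul,
    Fintype.sum_prod_type, Finset.sum_ite_irrel, Finset.sum_const_zero, Finset.sum_ite_eq,
    Finset.mem_univ, if_true, Finset.mul_sum]
  exact Finset.sum_comm

lemma trA_mul_one_kronecker (B : Matrix (Fin dB) (Fin dB) ℂ)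
    (M : Matrix (Fin dA × Fin dB) (Fin dA × Fin dB) ℂ) :
    trA (M * (1 ⊗ₖ B)) = trA M * B := by
  ext k l
  simp only [trA, of_apply, mul_apply, kroneckerMap_apply, one_apply, ite_mul, one_mul, zero_mul,
    mul_ite, mul_zero, Fintype.sum_prod_type, Finset.sum_ite_irrel, Finset.sum_const_zero,
    Finset.sum_ite_eq', Finset.mem_univ, if_true, Finset.sum_mul]
  exact Finset.sum_comm

lemma trA_kronecker_conj {A : Matrix (Fin dA) (Fin dA) ℂ} (hA : Aᴴ * A = 1)
    (B : Matrix (Fin dB) (Fin dB) ℂ) (M : Matrix (Fin dA × Fin dB) (Fin dA × Fin dB) ℂ) :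
    trA ((A ⊗ₖ B) * M * (A ⊗ₖ B)ᴴ) = B * trA M * Bᴴ := by
  have hsplit : A ⊗ₖ B = (A ⊗ₖ 1) * (1 ⊗ₖ B) := by rw [← mul_kronecker_mul, mul_one, one_mul]
  calc trA ((A ⊗ₖ B) * M * (A ⊗ₖ B)ᴴ)
        = trA ((A ⊗ₖ 1) * ((1 ⊗ₖ B) * M * (1 ⊗ₖ Bᴴ) * (Aᴴ ⊗ₖ 1))) := by
          rw [hsplit, conjTranspose_mul, conjTranspose_kronecker, conjTranspose_kronecker,
            conjTranspose_one, conjTranspose_one]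
          simp only [mul_assoc]
    _ = trA ((1 ⊗ₖ B) * M * (1 ⊗ₖ Bᴴ) * ((Aᴴ ⊗ₖ 1) * (A ⊗ₖ 1))) := by
          rw [trA_kronecker_one_mul_comm]
          simp only [mul_assoc]
    _ = B * trA M * Bᴴ := by
          rw [← mul_kronecker_mul, hA, mul_one, one_kronecker_one, mul_one,
            trA_mul_one_kronecker, trA_one_kronecker_mul]

lemma trA_krausMap_kronecker {J : Type*} [Fintype J] {U : J → Matrix (Fin dA) (Fin dA) ℂ}
    (hU : ∀ j, (U j)ᴴ * U j = 1) (K : J → Matrix (Fin dB) (Fin dB) ℂ)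
    (M : Matrix (Fin dA × Fin dB) (Fin dA × Fin dB) ℂ) :
    trA (krausMap (fun j => U j ⊗ₖ K j) M) = krausMap K (trA M) := by
  simp only [krausMap, trA_sum, trA_kronecker_conj (hU _)]

end PartialTrace

lemma DlowE_le_DlowE_of_trPos_le {n : Type*} [Fintype n] [DecidableEq n] (ε : ℝ)
    {ρ σ ρ' σ' : Matrix n n ℂ}
    (h : ∀ γ : ℝ, trPos (ρ' - (2 : ℝ) ^ γ • σ') ≤ trPos (ρ - (2 : ℝ) ^ γ • σ)) :
    DlowE ε ρ' σ' ≤ DlowE ε ρ σ :=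
  sSup_le_sSup <| Set.image_mono fun γ hγ => le_trans hγ (h γ)

theorem condEntropy_LOCC_mono_general {dA dB : ℕ} (ψ : Fin dA × Fin dB → ℂ)
    {J : Type} [Fintype J] (U : J → Matrix (Fin dA) (Fin dA) ℂ)
    (hU : ∀ j, U j ∈ Matrix.unitaryGroup (Fin dA) ℂ)
    (K : J → Matrix (Fin dB) (Fin dB) ℂ)
    (hK : ∑ j, (K j)ᴴ * K j = (1 : Matrix (Fin dB) (Fin dB) ℂ))
    (ε : ℝ) :
    DlowE ε (∑ j, (U j ⊗ₖ K j) * Matrix.vecMulVec ψ (star ψ) * (U j ⊗ₖ K j)ᴴ)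
        ((1 : Matrix (Fin dA) (Fin dA) ℂ) ⊗ₖ
          trA (∑ j, (U j ⊗ₖ K j) * Matrix.vecMulVec ψ (star ψ) * (U j ⊗ₖ K j)ᴴ)) ≤
      DlowE ε (Matrix.vecMulVec ψ (star ψ))
        ((1 : Matrix (Fin dA) (Fin dA) ℂ) ⊗ₖ trA (Matrix.vecMulVec ψ (star ψ))) := by
  set Ψ := vecMulVec ψ (star ψ)
  set V : J → Matrix (Fin dA × Fin dB) (Fin dA × Fin dB) ℂ := fun j => U j ⊗ₖ K j
  change DlowE ε (krausMap V Ψ) (1 ⊗ₖ trA (krausMap V Ψ)) ≤ DlowE ε Ψ (1 ⊗ₖ trA Ψ)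
  have hUU : ∀ j, (U j)ᴴ * U j = 1 := fun j => mem_unitaryGroup_iff'.mp (hU j)
  have hΨ : Ψ.IsHermitian := (posSemidef_vecMulVec_self_star ψ).isHermitian
  have hΨB : (1 ⊗ₖ trA Ψ : Matrix (Fin dA × Fin dB) (Fin dA × Fin dB) ℂ).IsHermitian := by
    rw [IsHermitian, conjTranspose_kronecker, conjTranspose_one, hΨ.trA.eq]
  refine DlowE_le_DlowE_of_trPos_le ε fun γ => ?_
  rw [trA_krausMap_kronecker hUU,
    ← krausMap_kronecker_one_kronecker (fun j => mem_unitaryGroup_iff.mp (hU j)),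
    ← krausMap_smul, ← krausMap_sub]
  exact trPos_krausMap_le V (sum_conjTranspose_mul_kronecker hUU hK)
    (hΨ.sub (hΨB.smul (IsSelfAdjoint.all _)))

/-- Monotonicity of the conditional information spectrum entropy of a pure state under an LOCC
map in Lo–Popescu form `X ↦ ∑ⱼ (Uⱼ ⊗ Kⱼ) X (Uⱼᴴ ⊗ Kⱼᴴ)`:
`D̲_s^ε(σ_AB ‖ 1_A ⊗ σ_B) ≤ D̲_s^ε(ψ_AB ‖ 1_A ⊗ ψ_B)`, i.e.
`H̄_s^ε(A|B)_ψ ≤ H̄_s^ε(A|B)_σ`. -/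
theorem condEntropy_LOCC_mono {dA dB : ℕ} (ψ : Fin dA × Fin dB → ℂ)
    (hψ : ∑ x, ‖ψ x‖ ^ 2 = 1)
    {J : Type} [Fintype J] (U : J → Matrix (Fin dA) (Fin dA) ℂ)
    (hU : ∀ j, U j ∈ Matrix.unitaryGroup (Fin dA) ℂ)
    (K : J → Matrix (Fin dB) (Fin dB) ℂ)
    (hK : ∑ j, (K j)ᴴ * K j = (1 : Matrix (Fin dB) (Fin dB) ℂ))
    (ε : ℝ) (hε0 : 0 < ε) (hε1 : ε < 1) :
    DlowE ε (∑ j, (U j ⊗ₖ K j) * Matrix.vecMulVec ψ (star ψ) * (U j ⊗ₖ K j)ᴴ)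
        ((1 : Matrix (Fin dA) (Fin dA) ℂ) ⊗ₖ
          trA (∑ j, (U j ⊗ₖ K j) * Matrix.vecMulVec ψ (star ψ) * (U j ⊗ₖ K j)ᴴ)) ≤
      DlowE ε (Matrix.vecMulVec ψ (star ψ))
        ((1 : Matrix (Fin dA) (Fin dA) ℂ) ⊗ₖ trA (Matrix.vecMulVec ψ (star ψ))) :=
  condEntropy_LOCC_mono_general ψ U hU K hK ε
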